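/- arXiv:2304.13466 — 4 statements merged into one kernel-verified Lean document; each statement's English description precedes it below -/
import Mathlib

section
/- Let H ⊆ 2^{[n]} be a shifted 3-wise t-intersecting family with H ⊄ F_0^t, let h = min{i : |H ∩ [t+i]| ≥ t for all H ∈ H}, and for 0 ≤ i ≤ h define T_i = {H ∩ [t+h, n] : H ∈ H, [t+h−1] \ H = [t+h−i, t+h−1]} ⊆ 2^{[t+h,n]}. Then T_i is 2-wise (2i+1)-intersecting for every 0 ≤ i ≤ h. -/
open Finset

/-- p-biased measure of a family on ground set of size `n` (= `[n]`). -/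
def mu (p : ℝ) (n : ℕ) (G : Finset (Finset ℕ)) : ℝ :=
  ∑ A ∈ G, p ^ A.card * (1 - p) ^ (n - A.card)

/-- p-biased measure of a family on an arbitrary finite ground set `X`. -/
def muOn (p : ℝ) (X : Finset ℕ) (G : Finset (Finset ℕ)) : ℝ :=
  ∑ A ∈ G, p ^ A.card * (1 - p) ^ (X.card - A.card)

/-- `F_0^t = {F ⊆ [n] : [t] ⊆ F}`. -/
def F0 (n t : ℕ) : Finset (Finset ℕ) :=
  (Finset.Icc 1 n).powerset.filter (fun F => Finset.Icc 1 t ⊆ F)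

/-- `F_1^t = {F ⊆ [n] : |F ∩ [t+3]| ≥ t+2}`. -/
def F1 (n t : ℕ) : Finset (Finset ℕ) :=
  (Finset.Icc 1 n).powerset.filter (fun F => t + 2 ≤ (F ∩ Finset.Icc 1 (t + 3)).card)

/-- `F_2^t = {F ⊆ [n] : |F ∩ [t+6]| ≥ t+4}`. -/
def F2 (n t : ℕ) : Finset (Finset ℕ) :=
  (Finset.Icc 1 n).powerset.filter (fun F => t + 4 ≤ (F ∩ Finset.Icc 1 (t + 6)).card)

/-- `p_0(t) = 2/(√(4t+9) − 1)`. -/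
noncomputable def p0 (t : ℕ) : ℝ := 2 / (Real.sqrt (4 * t + 9) - 1)

/-- The family is `r`-wise `t`-intersecting: any `r` members (with repetition)
intersect in at least `t` elements. -/
def RWise (r t : ℕ) (G : Finset (Finset ℕ)) : Prop :=
  ∀ f : Fin r → Finset ℕ, (∀ k, f k ∈ G) → t ≤ (⋂ k, (f k : Set ℕ)).ncard

/-- The shift `s_{i,j}` of a single set `A`, relative to the family `G`. -/
def shiftSet (i j : ℕ) (G : Finset (Finset ℕ)) (A : Finset ℕ) : Finset ℕ :=
  if A ∩ {i, j} = {j} ∧ (A.erase j ∪ {i}) ∉ G then A.erase j ∪ {i} else A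

/-- The shifting operation `σ_{i,j}` applied to a family. -/
def shift (i j : ℕ) (G : Finset (Finset ℕ)) : Finset (Finset ℕ) :=
  G.image (shiftSet i j G)

/-- `G` and `H` are isomorphic as families on ground set `[n]`:
`H` is the image of `G` under a permutation preserving `[n]`. -/
def Iso (n : ℕ) (G H : Finset (Finset ℕ)) : Prop :=
  ∃ τ : Equiv.Perm ℕ, (∀ x, x ∈ Finset.Icc 1 n ↔ τ x ∈ Finset.Icc 1 n) ∧
    H = G.image (fun A => A.image τ)

/-- `G` is `(3,t)`-maximal on `[n]`. -/
def Max3 (n t : ℕ) (G : Finset (Finset ℕ)) : Prop :=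
  (∀ A ∈ G, A ⊆ Finset.Icc 1 n) ∧ RWise 3 t G ∧
    ∀ F : Finset ℕ, F ⊆ Finset.Icc 1 n → F ∉ G → ¬ RWise 3 t (insert F G)

/-- `G` is shifted on `[n]`. -/
def Shifted (n : ℕ) (G : Finset (Finset ℕ)) : Prop :=
  ∀ i j : ℕ, 1 ≤ i → i < j → j ≤ n → shift i j G = G

/-- One shifting step. -/
def ShiftStep (n : ℕ) (G H : Finset (Finset ℕ)) : Prop :=
  ∃ i j : ℕ, 1 ≤ i ∧ i ≤ n ∧ 1 ≤ j ∧ j ≤ n ∧ H = shift i j G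

/-! If two members of `T_i` met in at most `2i` points of `[t+h, n]`, shifting could move
half of those common points out of `A` and the other half out of `B` into the `i` slots
`[t+h-i, t+h-1]` that both miss. The shifted sets then meet only inside `[t+h-1]`, and a member
`D` of `H` with `|D ∩ [t+h-1]| < t` (minimality of `h`; here `h ≥ 1` since `H ⊄ F_0^t`)
makes the three of them violate the `3`-wise `t`-intersection. -/

namespace Shifted

variable {n : ℕ} {G : Finset (Finset ℕ)}

theorem union_singleton_erase_mem (hG : Shifted n G) {A : Finset ℕ} (hA : A ∈ G) {a b : ℕ}
    (ha : 1 ≤ a) (hab : a < b) (hb : b ≤ n) (hbA : b ∈ A) (haA : a ∉ A) :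
    A.erase b ∪ {a} ∈ G := by
  by_contra hnot
  have hcond : A ∩ {a, b} = {b} := by
    ext x
    simp only [mem_inter, mem_insert, mem_singleton]
    constructor
    · rintro ⟨hx, rfl | rfl⟩
      · exact absurd hx haA
      · rfl
    · rintro rfl
      exact ⟨hbA, Or.inr rfl⟩
  have hshiftSet : shiftSet a b G A = A.erase b ∪ {a} := if_pos ⟨hcond, hnot⟩
  exact hnot (hG a b ha hab hb ▸ hshiftSet ▸ mem_image_of_mem _ hA)

theorem sdiff_union_mem (hG : Shifted n G) {A S T : Finset ℕ} (hA : A ∈ G) (hSA : S ⊆ A)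
    (hTA : Disjoint T A) (hcard : #S = #T) (hSn : ∀ s ∈ S, s ≤ n) (hT : ∀ a ∈ T, 1 ≤ a)
    (hTS : ∀ a ∈ T, ∀ s ∈ S, a < s) : A \ S ∪ T ∈ G := by
  induction T using Finset.induction_on generalizing S with
  | empty => simpa [card_eq_zero.1 hcard] using hA
  | insert a T haT ih =>
    obtain ⟨s, hs⟩ : S.Nonempty := card_pos.1 (by rw [hcard, card_insert_of_notMem haT]; omega)
    have hprev : A \ S.erase s ∪ T ∈ G :=
      ih (S := S.erase s) ((erase_subset _ _).trans hSA)
        (disjoint_of_subset_left (subset_insert _ _) hTA)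
        (by rw [card_erase_of_mem hs, hcard, card_insert_of_notMem haT]; rfl)
        (fun x hx => hSn x (mem_of_mem_erase hx))
        (fun x hx => hT x (mem_insert_of_mem hx))
        (fun x hx y hy => hTS x (mem_insert_of_mem hx) y (mem_of_mem_erase hy))
    have haA : a ∉ A := disjoint_left.1 hTA (mem_insert_self _ _)
    have has : a < s := hTS a (mem_insert_self _ _) s hs
    have hsT : s ∉ T := fun h => (hTS s (mem_insert_of_mem h) s hs).false
    have hstep := hG.union_singleton_erase_mem hprev (hT a (mem_insert_self _ _)) has
      (hSn s hs) (by simp [hSA hs, hsT]) (by simp [haA, haT])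
    convert hstep using 1
    ext x
    by_cases hxs : x = s <;> by_cases hxa : x = a <;> simp_all

theorem exists_mem_of_card_le (hG : Shifted n G) {A S I : Finset ℕ} {m : ℕ} (hA : A ∈ G)
    (hSA : S ⊆ A) (hS : ∀ s ∈ S, m ≤ s ∧ s ≤ n) (hIA : Disjoint I A)
    (hI : ∀ a ∈ I, 1 ≤ a ∧ a < m) (hcard : #S ≤ #I) :
    ∃ A' ∈ G, ∀ x ∈ A', m ≤ x → x ∈ A ∧ x ∉ S := by
  obtain ⟨T, hTI, hT⟩ := exists_subset_card_eq hcard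
  refine ⟨A \ S ∪ T, hG.sdiff_union_mem hA hSA (disjoint_of_subset_left hTI hIA) hT.symm
    (fun s hs => (hS s hs).2) (fun a ha => (hI a (hTI ha)).1)
    (fun a ha s hs => (hI a (hTI ha)).2.trans_le (hS s hs).1), fun x hx hmx => ?_⟩
  rcases mem_union.1 hx with hx | hx
  · exact mem_sdiff.1 hx
  · exact absurd hmx (not_le.2 (hI x (hTI hx)).2)

theorem exists_mem_mem_forall_lt (hG : Shifted n G) {A B I : Finset ℕ} {m : ℕ} (hA : A ∈ G)
    (hB : B ∈ G) (hIA : Disjoint I A) (hIB : Disjoint I B) (hI : ∀ a ∈ I, 1 ≤ a ∧ a < m)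
    (hcard : #((A ∩ Icc m n) ∩ (B ∩ Icc m n)) ≤ 2 * #I) :
    ∃ A' ∈ G, ∃ B' ∈ G, ∀ x ∈ A' ∩ B', x ≤ n → x < m := by
  set C := (A ∩ Icc m n) ∩ (B ∩ Icc m n)
  obtain ⟨S, hSC, hS⟩ := exists_subset_card_eq (min_le_right #I #C)
  have hC : ∀ x ∈ C, x ∈ A ∧ x ∈ B ∧ m ≤ x ∧ x ≤ n := fun x hx => by
    simp only [C, mem_inter, mem_Icc] at hx
    exact ⟨hx.1.1, hx.2.1, hx.1.2⟩
  obtain ⟨A', hA', hA'S⟩ := hG.exists_mem_of_card_le hA (fun x hx => (hC x (hSC hx)).1)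
    (fun x hx => (hC x (hSC hx)).2.2) hIA hI (hS.trans_le (min_le_left _ _))
  obtain ⟨B', hB', hB'S⟩ := hG.exists_mem_of_card_le hB
    (fun x hx => (hC x (sdiff_subset hx)).2.1) (fun x hx => (hC x (sdiff_subset hx)).2.2)
    hIB hI (by rw [card_sdiff_of_subset hSC, hS]; omega)
  refine ⟨A', hA', B', hB', fun x hx hxn => not_le.1 fun hmx => ?_⟩
  obtain ⟨hxA, hxS⟩ := hA'S x (mem_inter.1 hx).1 hmx
  obtain ⟨hxB, hxCS⟩ := hB'S x (mem_inter.1 hx).2 hmx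
  exact hxCS (mem_sdiff.2 ⟨by simp [C, hxA, hxB, hmx, hxn], hxS⟩)

end Shifted

theorem rWise_two_iff {s : ℕ} {G : Finset (Finset ℕ)} :
    RWise 2 s G ↔ ∀ A ∈ G, ∀ B ∈ G, s ≤ #(A ∩ B) := by
  have hinter (f : Fin 2 → Finset ℕ) : ⋂ k, (f k : Set ℕ) = ↑(f 0 ∩ f 1) := by
    ext x
    simp [Fin.forall_fin_two]
  refine ⟨fun h A hA B hB => ?_, fun h f hf => ?_⟩
  · have := h ![A, B] (by simp [Fin.forall_fin_two, hA, hB])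
    rwa [hinter, Set.ncard_coe_finset] at this
  · rw [hinter, Set.ncard_coe_finset]
    exact h _ (hf 0) _ (hf 1)

theorem RWise.le_card_inter_inter {t : ℕ} {G : Finset (Finset ℕ)} (hG : RWise 3 t G)
    {A B C : Finset ℕ} (hA : A ∈ G) (hB : B ∈ G) (hC : C ∈ G) : t ≤ #(A ∩ B ∩ C) := by
  have hinter : ⋂ k, (![A, B, C] k : Set ℕ) = ↑(A ∩ B ∩ C) := by
    ext x
    simp [Fin.forall_fin_succ]
  have := hG ![A, B, C] (by simp [Fin.forall_fin_succ, hA, hB, hC])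
  rwa [hinter, Set.ncard_coe_finset] at this

theorem subset_F0_of_le_card_inter {n t : ℕ} {G : Finset (Finset ℕ)}
    (hG : ∀ A ∈ G, A ⊆ Icc 1 n) (ht : ∀ A ∈ G, t ≤ #(A ∩ Icc 1 t)) : G ⊆ F0 n t := by
  intro A hA
  have hIcc : A ∩ Icc 1 t = Icc 1 t :=
    eq_of_subset_of_card_le inter_subset_right (by simpa using ht A hA)
  simp only [F0, mem_filter, mem_powerset]
  exact ⟨hG A hA, hIcc ▸ inter_subset_left⟩

theorem stmt_14 (n t h : ℕ) (H : Finset (Finset ℕ)) (hH : ∀ A ∈ H, A ⊆ Finset.Icc 1 n)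
    (hshift : Shifted n H) (hint : RWise 3 t H) (hnot : ¬ H ⊆ F0 n t)
    (hh : ∀ A ∈ H, t ≤ (A ∩ Finset.Icc 1 (t + h)).card)
    (hh' : ∀ i < h, ∃ A ∈ H, (A ∩ Finset.Icc 1 (t + i)).card < t) :
    ∀ i ≤ h, RWise 2 (2 * i + 1)
      ((H.filter (fun A => Finset.Icc 1 (t + h - 1) \ A =
          Finset.Icc (t + h - i) (t + h - 1))).image
        (fun A => A ∩ Finset.Icc (t + h) n)) := by
  intro i hi
  have hh_ne : h ≠ 0 := by
    rintro rfl
    exact hnot (subset_F0_of_le_card_inter hH (by simpa using hh))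
  obtain ⟨D, hD, hDt⟩ := hh' (h - 1) (by omega)
  rw [show t + (h - 1) = t + h - 1 by omega] at hDt
  set I := Icc (t + h - i) (t + h - 1)
  have hIcard : #I = i := by simp only [I, Nat.card_Icc]; omega
  have hI : ∀ a ∈ I, 1 ≤ a ∧ a < t + h := fun a ha => by simp only [I, mem_Icc] at ha; omega
  have hdisj {A : Finset ℕ} (hA : Icc 1 (t + h - 1) \ A = I) : Disjoint I A :=
    hA ▸ disjoint_sdiff_self_left
  simp only [rWise_two_iff, mem_image, mem_filter]
  rintro _ ⟨A, ⟨hA, hAI⟩, rfl⟩ _ ⟨B, ⟨hB, hBI⟩, rfl⟩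
  by_contra! hlt
  obtain ⟨A', hA', B', hB', hA'B'⟩ := hshift.exists_mem_mem_forall_lt hA hB (hdisj hAI)
    (hdisj hBI) hI (by omega)
  have hsub : A' ∩ B' ∩ D ⊆ D ∩ Icc 1 (t + h - 1) := fun x hx => by
    obtain ⟨hxAB, hxD⟩ := mem_inter.1 hx
    have hxn := mem_Icc.1 (hH D hD hxD)
    have := hA'B' x hxAB hxn.2
    exact mem_inter.2 ⟨hxD, mem_Icc.2 ⟨hxn.1, by omega⟩⟩
  have := hint.le_card_inter_inter hA' hB' hD
  have := card_le_card hsub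
  omega
end

section
/- With the setup of the previous lemma, if additionally H ⊄ F_h^t := {F ⊆ [n] : |F ∩ [t+3h]| ≥ t+2h}, then T_h is 2-wise (2h+2)-intersecting. -/
open Finset

lemma exists_injOn_finset {α β : Type*} [Nonempty β] (s : Finset α) (t : Finset β)
    (hc : s.card ≤ t.card) : ∃ f : α → β, Set.InjOn f ↑s ∧ ∀ x ∈ s, f x ∈ t := by
  obtain ⟨f, hmaps, hinj⟩ := Set.Finite.exists_injOn_of_encard_le (s := (s : Set α))
    (t := (t : Set β)) s.finite_toSet (by
      rw [Set.encard_coe_eq_coe_finsetCard, Set.encard_coe_eq_coe_finsetCard]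
      exact_mod_cast hc)
  exact ⟨f, hinj, fun x hx => by simpa using hmaps hx⟩

lemma mem_of_shifted {n : ℕ} {H : Finset (Finset ℕ)} (hs : Shifted n H)
    {A : Finset ℕ} (hA : A ∈ H) (hAn : A ⊆ Finset.Icc 1 n) {i j : ℕ}
    (hi : 1 ≤ i) (hij : i < j) (hjA : j ∈ A) (hiA : i ∉ A) :
    A.erase j ∪ {i} ∈ H := by
  have hjn : j ≤ n := (Finset.mem_Icc.mp (hAn hjA)).2
  by_contra hB
  have hcond : A ∩ {i, j} = {j} := by
    ext x
    simp only [Finset.mem_inter, Finset.mem_insert, Finset.mem_singleton]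
    constructor
    · rintro ⟨hxA, rfl | rfl⟩
      · exact absurd hxA hiA
      · rfl
    · rintro rfl; exact ⟨hjA, Or.inr rfl⟩
  have heq : shiftSet i j H A = A.erase j ∪ {i} := by
    rw [shiftSet, if_pos ⟨hcond, hB⟩]
  have hmem : A.erase j ∪ {i} ∈ shift i j H := by
    rw [shift]; exact Finset.mem_image.mpr ⟨A, hA, heq⟩
  rw [hs i j hi hij hjn] at hmem
  exact hB hmem

lemma multishift {n : ℕ} {H : Finset (Finset ℕ)} (hH : ∀ A ∈ H, A ⊆ Finset.Icc 1 n)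
    (hs : Shifted n H) (p : ℕ → ℕ) (J : Finset ℕ) :
    ∀ A : Finset ℕ, A ∈ H → J ⊆ A →
      (∀ j ∈ J, 1 ≤ p j ∧ p j < j ∧ p j ∉ A) → Set.InjOn p ↑J →
      (A \ J) ∪ J.image p ∈ H := by
  classical
  induction J using Finset.induction_on with
  | empty => intro A hA _ _ _; simpa using hA
  | @insert a J ha ih =>
    intro A hA hJA hcond hinj
    have hJ'A : J ⊆ A := (Finset.subset_insert a J).trans hJA
    have hS : (A \ J) ∪ J.image p ∈ H :=
      ih A hA hJ'A (fun j hj => hcond j (Finset.mem_insert_of_mem hj))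
        (hinj.mono (by exact_mod_cast Finset.subset_insert a J))
    set S := (A \ J) ∪ J.image p with hSdef
    have haA : a ∈ A := hJA (Finset.mem_insert_self a J)
    obtain ⟨hpa1, hpalt, hpaA⟩ := hcond a (Finset.mem_insert_self a J)
    have haS : a ∈ S := Finset.mem_union_left _ (Finset.mem_sdiff.mpr ⟨haA, ha⟩)
    have hpaS : p a ∉ S := by
      simp only [hSdef, Finset.mem_union, Finset.mem_sdiff, Finset.mem_image, not_or, not_and,
        not_exists]
      refine ⟨fun h1 => absurd h1 hpaA, ?_⟩
      rintro j hj hpj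
      have : j = a := hinj (by simp [hj]) (by simp) hpj
      exact ha (this ▸ hj)
    have hnew := mem_of_shifted hs hS (hH S hS) hpa1 hpalt haS hpaS
    have hpne : ∀ j ∈ J, p j ≠ a := fun j hj hje =>
      (hcond j (Finset.mem_insert_of_mem hj)).2.2 (hje ▸ haA)
    have heq : S.erase a ∪ {p a} = (A \ insert a J) ∪ (insert a J).image p := by
      ext x
      simp only [hSdef, Finset.mem_union, Finset.mem_erase, Finset.mem_sdiff, Finset.mem_image,
        Finset.mem_insert, Finset.mem_singleton]
      constructor
      · rintro (⟨hxa, ⟨hxA, hxJ⟩ | ⟨j, hj, rfl⟩⟩ | rfl)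
        · exact Or.inl ⟨hxA, by tauto⟩
        · exact Or.inr ⟨j, Or.inr hj, rfl⟩
        · exact Or.inr ⟨a, Or.inl rfl, rfl⟩
      · rintro (⟨hxA, hx⟩ | ⟨j, rfl | hj, rfl⟩)
        · have hxa : x ≠ a := fun he => hx (Or.inl he)
          exact Or.inl ⟨hxa, Or.inl ⟨hxA, fun hxJ => hx (Or.inr hxJ)⟩⟩
        · exact Or.inr rfl
        · exact Or.inl ⟨hpne j hj, Or.inr ⟨j, hj, rfl⟩⟩
    rw [heq] at hnew
    exact hnew

theorem stmt_15 (n t h : ℕ) (H : Finset (Finset ℕ)) (hH : ∀ A ∈ H, A ⊆ Finset.Icc 1 n)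
    (hshift : Shifted n H) (hint : RWise 3 t H) (hnot : ¬ H ⊆ F0 n t)
    (hh : ∀ A ∈ H, t ≤ (A ∩ Finset.Icc 1 (t + h)).card)
    (hh' : ∀ i < h, ∃ A ∈ H, (A ∩ Finset.Icc 1 (t + i)).card < t)
    (hnoth : ¬ H ⊆ (Finset.Icc 1 n).powerset.filter
        (fun F => t + 2 * h ≤ (F ∩ Finset.Icc 1 (t + 3 * h)).card)) :
    RWise 2 (2 * h + 2)
      ((H.filter (fun A => Finset.Icc 1 (t + h - 1) \ A =
          Finset.Icc (t + h - h) (t + h - 1))).image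
        (fun A => A ∩ Finset.Icc (t + h) n)) := by

  classical
  -- t ≥ 1
  have ht : 1 ≤ t := by
    by_contra ht0
    apply hnot
    intro A hA
    have htz : t = 0 := by omega
    subst htz
    simp only [F0, Finset.mem_filter, Finset.mem_powerset]
    exact ⟨hH A hA, by simp⟩
  obtain ⟨C, hCH, hCnot⟩ := Finset.not_subset.mp hnoth
  have hCn : C ⊆ Finset.Icc 1 n := hH C hCH
  have hCcard : (C ∩ Finset.Icc 1 (t + 3 * h)).card < t + 2 * h := by
    by_contra hc
    push_neg at hc
    exact hCnot (Finset.mem_filter.mpr ⟨Finset.mem_powerset.mpr hCn, hc⟩)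
  intro f hf
  obtain ⟨A, hAf, hfA⟩ := Finset.mem_image.mp (hf 0)
  obtain ⟨B, hBf, hfB⟩ := Finset.mem_image.mp (hf 1)
  rw [Finset.mem_filter] at hAf hBf
  obtain ⟨hAH, hAcond⟩ := hAf
  obtain ⟨hBH, hBcond⟩ := hBf
  have hth : t + h - h = t := by omega
  rw [hth] at hAcond hBcond
  have hAn : A ⊆ Finset.Icc 1 n := hH A hAH
  have hBn : B ⊆ Finset.Icc 1 n := hH B hBH
  have hstruct : ∀ X : Finset ℕ, Finset.Icc 1 (t + h - 1) \ X = Finset.Icc t (t + h - 1) →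
      (∀ x, 1 ≤ x → x ≤ t - 1 → x ∈ X) ∧ (∀ x, t ≤ x → x ≤ t + h - 1 → x ∉ X) := by
    intro X hX
    constructor
    · intro x hx1 hx2
      by_contra hxX
      have hmem : x ∈ Finset.Icc 1 (t + h - 1) \ X := by
        rw [Finset.mem_sdiff, Finset.mem_Icc]
        exact ⟨⟨hx1, by omega⟩, hxX⟩
      rw [hX, Finset.mem_Icc] at hmem
      omega
    · intro x hx1 hx2 hxX
      have hmem : x ∈ Finset.Icc t (t + h - 1) := Finset.mem_Icc.mpr ⟨hx1, hx2⟩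
      rw [← hX] at hmem
      exact (Finset.mem_sdiff.mp hmem).2 hxX
  obtain ⟨hAlow, hAmid⟩ := hstruct A hAcond
  obtain ⟨hBlow, hBmid⟩ := hstruct B hBcond
  have hiInter : (⋂ k, ((f k : Finset ℕ) : Set ℕ)) = ((f 0 ∩ f 1 : Finset ℕ) : Set ℕ) := by
    ext x
    simp [Set.mem_iInter, Fin.forall_fin_two]
  rw [hiInter, Set.ncard_coe_finset, ← hfA, ← hfB]
  by_contra hlt
  push_neg at hlt
  set D := A ∩ B ∩ Finset.Icc (t + h) n with hDdef
  have hDeq : A ∩ Finset.Icc (t + h) n ∩ (B ∩ Finset.Icc (t + h) n) = D := by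
    rw [hDdef]; ext x
    simp only [Finset.mem_inter]
    tauto
  rw [hDeq] at hlt
  have hDcard : D.card ≤ 2 * h + 1 := by omega
  -- the key interval sets
  set I1 := Finset.Icc 1 (t - 1) with hI1def
  set Bs := Finset.Icc t (t + h - 1) with hBsdef
  set W := Finset.Icc (t + h) (t + 3 * h) with hWdef
  set G := Finset.Icc 1 (t + 3 * h) \ C with hGdef
  set G3 := (G ∩ W) \ (A ∩ B) with hG3def
  set Mid := D ∩ C ∩ W with hMiddef
  set L := (D ∩ C) \ W with hLdef
  set g1 := (I1 \ C).card with hg1def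
  set g2 := (Bs \ C).card with hg2def
  have cardI1 : I1.card = t - 1 := by rw [hI1def, Nat.card_Icc]; omega
  have cardBs : Bs.card = h := by rw [hBsdef, Nat.card_Icc]; omega
  have hGbig : h + 1 ≤ G.card := by
    have h1 := Finset.card_inter_add_card_sdiff (Finset.Icc 1 (t + 3 * h)) C
    rw [← hGdef] at h1
    have h2 : (Finset.Icc 1 (t + 3 * h)).card = t + 3 * h := by rw [Nat.card_Icc]; omega
    have h3 : (Finset.Icc 1 (t + 3 * h) ∩ C).card = (C ∩ Finset.Icc 1 (t + 3 * h)).card := by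
      rw [Finset.inter_comm]
    omega
  have hGsplit : G.card = (I1 \ C).card + (Bs \ C).card + (G ∩ W).card := by
    have hunion : (I1 \ C) ∪ (Bs \ C) ∪ (G ∩ W) = G := by
      ext x
      by_cases hxC : x ∈ C <;>
        simp only [hI1def, hBsdef, hWdef, hGdef, Finset.mem_union, Finset.mem_sdiff,
          Finset.mem_inter, Finset.mem_Icc, hxC, and_true, and_false, false_and, true_and,
          not_true, not_false_iff, or_false, false_or, iff_false, not_or, not_and, not_le] <;>
        omega
    have d1 : Disjoint (I1 \ C) (Bs \ C) := by
      rw [Finset.disjoint_left]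
      intro x hx hx'
      rw [hI1def, Finset.mem_sdiff, Finset.mem_Icc] at hx
      rw [hBsdef, Finset.mem_sdiff, Finset.mem_Icc] at hx'
      omega
    have d2 : Disjoint ((I1 \ C) ∪ (Bs \ C)) (G ∩ W) := by
      rw [Finset.disjoint_left]
      intro x hx hx'
      rw [Finset.mem_union, hI1def, hBsdef, Finset.mem_sdiff, Finset.mem_sdiff,
        Finset.mem_Icc, Finset.mem_Icc] at hx
      rw [hWdef, Finset.mem_inter, Finset.mem_Icc] at hx'
      omega
    conv_lhs => rw [← hunion]
    rw [Finset.card_union_of_disjoint d2, Finset.card_union_of_disjoint d1]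
  have hGWsub : G ∩ W ⊆ G3 ∪ (D \ C) := by
    intro x hx
    by_cases hAB : x ∈ A ∩ B
    · refine Finset.mem_union_right _ ?_
      rw [Finset.mem_sdiff]
      have hxG := (Finset.mem_inter.mp hx).1
      have hxW := (Finset.mem_inter.mp hx).2
      have hxn : x ≤ n := (Finset.mem_Icc.mp (hAn (Finset.mem_inter.mp hAB).1)).2
      rw [hWdef, Finset.mem_Icc] at hxW
      constructor
      · rw [hDdef]
        exact Finset.mem_inter.mpr ⟨hAB, Finset.mem_Icc.mpr ⟨hxW.1, hxn⟩⟩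
      · rw [hGdef, Finset.mem_sdiff] at hxG
        exact hxG.2
    · exact Finset.mem_union_left _ (by rw [hG3def, Finset.mem_sdiff]; exact ⟨hx, hAB⟩)
  have hGW3 : (G ∩ W).card ≤ G3.card + (D \ C).card :=
    le_trans (Finset.card_le_card hGWsub) (Finset.card_union_le _ _)
  have hDsplit := Finset.card_inter_add_card_sdiff D C
  have hglobal : (D ∩ C).card ≤ g1 + g2 + h + G3.card := by omega
  have hMLsplit := Finset.card_inter_add_card_sdiff (D ∩ C) W
  rw [← hMiddef, ← hLdef] at hMLsplit
  have hCsplit : (C ∩ I1).card + (C ∩ Bs).card + (C ∩ W).card ≤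
      (C ∩ Finset.Icc 1 (t + 3 * h)).card := by
    have hsub : (C ∩ I1) ∪ (C ∩ Bs) ∪ (C ∩ W) ⊆ C ∩ Finset.Icc 1 (t + 3 * h) := by
      intro x hx
      rw [Finset.mem_union, Finset.mem_union] at hx
      rw [Finset.mem_inter, Finset.mem_Icc]
      rcases hx with (hx | hx) | hx <;> rw [Finset.mem_inter] at hx <;>
        [rw [hI1def, Finset.mem_Icc] at hx; rw [hBsdef, Finset.mem_Icc] at hx;
         rw [hWdef, Finset.mem_Icc] at hx] <;> exact ⟨hx.1, by omega⟩
    have d1 : Disjoint (C ∩ I1) (C ∩ Bs) := by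
      rw [Finset.disjoint_left]
      intro x hx hx'
      rw [Finset.mem_inter, hI1def, Finset.mem_Icc] at hx
      rw [Finset.mem_inter, hBsdef, Finset.mem_Icc] at hx'
      omega
    have d2 : Disjoint ((C ∩ I1) ∪ (C ∩ Bs)) (C ∩ W) := by
      rw [Finset.disjoint_left]
      intro x hx hx'
      rw [Finset.mem_union, Finset.mem_inter, Finset.mem_inter, hI1def, hBsdef,
        Finset.mem_Icc, Finset.mem_Icc] at hx
      rw [Finset.mem_inter, hWdef, Finset.mem_Icc] at hx'
      omega
    calc (C ∩ I1).card + (C ∩ Bs).card + (C ∩ W).card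
        = ((C ∩ I1) ∪ (C ∩ Bs) ∪ (C ∩ W)).card := by
          rw [Finset.card_union_of_disjoint d2, Finset.card_union_of_disjoint d1]
      _ ≤ _ := Finset.card_le_card hsub
  have cI1 : (C ∩ I1).card + g1 = t - 1 := by
    have h1 := Finset.card_inter_add_card_sdiff I1 C
    rw [Finset.inter_comm I1 C, ← hg1def] at h1
    omega
  have cBs : (C ∩ Bs).card + g2 = h := by
    have h1 := Finset.card_inter_add_card_sdiff Bs C
    rw [Finset.inter_comm Bs C, ← hg2def] at h1
    omega
  have hMidle : Mid.card ≤ (C ∩ W).card := by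
    apply Finset.card_le_card
    intro x hx
    rw [hMiddef, Finset.mem_inter, Finset.mem_inter] at hx
    exact Finset.mem_inter.mpr ⟨hx.1.2, hx.2⟩
  have hCW : (C ∩ W).card ≤ h + g1 + g2 := by omega
  -- choose the unremoved parts
  obtain ⟨R1, hR1sub, hR1card⟩ :=
    Finset.exists_subset_card_eq (min_le_right g1 Mid.card)
  obtain ⟨R2, hR2sub, hR2card⟩ :=
    Finset.exists_subset_card_eq (min_le_right (g1 - Mid.card) L.card)
  set K := (Mid \ R1) ∪ (L \ R2) with hKdef
  have hMidW : ∀ x ∈ Mid, x ∈ W := by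
    intro x hx; rw [hMiddef, Finset.mem_inter] at hx; exact hx.2
  have hLW : ∀ x ∈ L, x ∉ W := by
    intro x hx; rw [hLdef, Finset.mem_sdiff] at hx; exact hx.2
  have cMidR1 : (Mid \ R1).card = Mid.card - min g1 Mid.card := by
    rw [Finset.card_sdiff_of_subset hR1sub, hR1card]
  have cLR2 : (L \ R2).card = L.card - min (g1 - Mid.card) L.card := by
    rw [Finset.card_sdiff_of_subset hR2sub, hR2card]
  have hnum : (Mid \ R1).card ≤ h + g2 ∧
      (Mid \ R1).card + (L \ R2).card ≤ h + g2 + G3.card ∧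
      R1.card + R2.card ≤ g1 := by
    rw [Nat.min_def] at cMidR1 cLR2 hR1card hR2card
    split_ifs at cMidR1 cLR2 hR1card hR2card <;> omega
  -- slot pairs
  set basePairs : Finset (ℕ × ℕ) := Bs ×ˢ {0} ∪ (Bs \ C) ×ˢ {1} with hbPdef
  have memBP : ∀ pr : ℕ × ℕ, pr ∈ basePairs ↔
      (pr.1 ∈ Bs ∧ pr.2 = 0) ∨ (pr.1 ∈ Bs ∧ pr.1 ∉ C ∧ pr.2 = 1) := by
    intro pr
    rw [hbPdef, Finset.mem_union, Finset.mem_product, Finset.mem_product,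
      Finset.mem_singleton, Finset.mem_singleton, Finset.mem_sdiff]
    tauto
  have hdisjBP : Disjoint (Bs ×ˢ ({0} : Finset ℕ)) ((Bs \ C) ×ˢ ({1} : Finset ℕ)) := by
    rw [Finset.disjoint_left]
    rintro ⟨x, s⟩ h1 h2
    rw [Finset.mem_product, Finset.mem_singleton] at h1 h2
    exact one_ne_zero (h2.2.symm.trans h1.2)
  have cardBP : basePairs.card = h + g2 := by
    rw [hbPdef, Finset.card_union_of_disjoint hdisjBP, Finset.card_product, Finset.card_product]
    simp [cardBs, ← hg2def]
  set G3pairs := G3.image (fun g => (g, if g ∈ A then 1 else 0)) with hG3Pdef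
  have cardG3P : G3pairs.card = G3.card := by
    rw [hG3Pdef]
    apply Finset.card_image_of_injOn
    intro x _ y _ hxy
    exact congrArg Prod.fst hxy
  have hG3W : ∀ x ∈ G3, x ∈ W ∧ x ∉ C ∧ x ∉ A ∩ B := by
    intro x hx
    rw [hG3def, Finset.mem_sdiff, Finset.mem_inter] at hx
    obtain ⟨⟨hxG, hxW⟩, hxAB⟩ := hx
    rw [hGdef, Finset.mem_sdiff] at hxG
    exact ⟨hxW, hxG.2, hxAB⟩
  have memG3P : ∀ pr : ℕ × ℕ, pr ∈ G3pairs → pr.1 ∈ G3 ∧ (pr.2 = 0 → pr.1 ∉ A) ∧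
      (pr.2 = 1 → pr.1 ∈ A) ∧ (pr.2 = 0 ∨ pr.2 = 1) := by
    intro pr hpr
    rw [hG3Pdef, Finset.mem_image] at hpr
    obtain ⟨g, hg, rfl⟩ := hpr
    by_cases hgA : g ∈ A <;> simp only [hgA, if_true, if_false] <;>
      exact ⟨hg, by simp [hgA], by simp [hgA], by simp⟩
  have hBsG3 : ∀ pr ∈ basePairs, pr ∉ G3pairs := by
    intro pr hpr hpr'
    have h1 := (memBP pr).mp hpr
    have h2 := (memG3P pr hpr').1
    have h3 := (hG3W pr.1 h2).1
    rw [hWdef, Finset.mem_Icc] at h3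
    have h4 : pr.1 ∈ Bs := by tauto
    rw [hBsdef, Finset.mem_Icc] at h4
    omega
  -- injections
  obtain ⟨p1, hp1inj, hp1mem⟩ := exists_injOn_finset (Mid \ R1) basePairs
    (by rw [cardBP]; exact hnum.1)
  set used := (Mid \ R1).image p1 with husedef
  have husedsub : used ⊆ basePairs := by
    intro pr hpr
    rw [husedef, Finset.mem_image] at hpr
    obtain ⟨d, hd, rfl⟩ := hpr
    exact hp1mem d hd
  have cardused : used.card = (Mid \ R1).card := Finset.card_image_of_injOn hp1inj
  set rest := (basePairs \ used) ∪ G3pairs with hrestdef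
  have hrestcard : (L \ R2).card ≤ rest.card := by
    have hdisj : Disjoint (basePairs \ used) G3pairs := by
      rw [Finset.disjoint_left]
      intro pr h1 h2
      exact hBsG3 pr (Finset.mem_sdiff.mp h1).1 h2
    rw [hrestdef, Finset.card_union_of_disjoint hdisj, Finset.card_sdiff_of_subset husedsub,
      cardused, cardBP, cardG3P]
    omega
  obtain ⟨p2, hp2inj, hp2mem⟩ := exists_injOn_finset (L \ R2) rest hrestcard
  set φ := fun d => if d ∈ W then p1 d else p2 d with hphidef
  have hphiMid : ∀ d ∈ Mid \ R1, φ d = p1 d := by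
    intro d hd
    rw [hphidef]
    exact if_pos (hMidW d (Finset.mem_sdiff.mp hd).1)
  have hphiL : ∀ d ∈ L \ R2, φ d = p2 d := by
    intro d hd
    rw [hphidef]
    exact if_neg (hLW d (Finset.mem_sdiff.mp hd).1)
  have hphicases : ∀ d ∈ K, (φ d ∈ basePairs) ∨ (φ d ∈ G3pairs ∧ d ∉ W) := by
    intro d hd
    rw [hKdef, Finset.mem_union] at hd
    rcases hd with hd | hd
    · left; rw [hphiMid d hd]; exact hp1mem d hd
    · have hdW := hLW d (Finset.mem_sdiff.mp hd).1
      have := hp2mem d hd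
      rw [← hphiL d hd] at this
      rw [hrestdef, Finset.mem_union] at this
      rcases this with hb | hg
      · left; exact (Finset.mem_sdiff.mp hb).1
      · right; exact ⟨hg, hdW⟩
  have hphiinj : ∀ d1 ∈ K, ∀ d2 ∈ K, φ d1 = φ d2 → d1 = d2 := by
    intro d1 h1 d2 h2 he
    rw [hKdef, Finset.mem_union] at h1 h2
    have key : ∀ e1 ∈ Mid \ R1, ∀ e2 ∈ L \ R2, φ e1 ≠ φ e2 := by
      intro e1 he1 e2 he2 heq
      have hu : φ e1 ∈ used := by
        rw [husedef, Finset.mem_image]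
        exact ⟨e1, he1, (hphiMid e1 he1).symm⟩
      have hr : φ e2 ∈ rest := by
        rw [hphiL e2 he2]
        exact hp2mem e2 he2
      rw [hrestdef, Finset.mem_union] at hr
      rcases hr with hb | hg
      · rw [← heq] at hb
        exact (Finset.mem_sdiff.mp hb).2 hu
      · rw [← heq] at hg
        exact hBsG3 (φ e1) (husedsub hu) hg
    rcases h1 with h1 | h1 <;> rcases h2 with h2 | h2
    · rw [hphiMid d1 h1, hphiMid d2 h2] at he
      exact hp1inj (Finset.mem_coe.mpr h1) (Finset.mem_coe.mpr h2) he
    · exact absurd he (key d1 h1 d2 h2)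
    · exact absurd he.symm (key d2 h2 d1 h1)
    · rw [hphiL d1 h1, hphiL d2 h2] at he
      exact hp2inj (Finset.mem_coe.mpr h1) (Finset.mem_coe.mpr h2) he
  -- K element facts
  have hKsub : ∀ d ∈ K, d ∈ A ∧ d ∈ B ∧ d ∈ C ∧ t + h ≤ d ∧ d ≤ n := by
    intro d hd
    have hdc : d ∈ D ∩ C := by
      rw [hKdef, Finset.mem_union] at hd
      rcases hd with hd | hd
      · have := (Finset.mem_sdiff.mp hd).1
        rw [hMiddef, Finset.mem_inter] at this
        exact this.1
      · have := (Finset.mem_sdiff.mp hd).1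
        rw [hLdef, Finset.mem_sdiff] at this
        exact this.1
    rw [Finset.mem_inter, hDdef, Finset.mem_inter, Finset.mem_inter, Finset.mem_Icc] at hdc
    exact ⟨hdc.1.1.1, hdc.1.1.2, hdc.2, hdc.1.2.1, hdc.1.2.2⟩
  have hKnW : ∀ d ∈ K, d ∉ W → t + 3 * h < d := by
    intro d hd hdW
    have h1 := (hKsub d hd).2.2.2.1
    rw [hWdef, Finset.mem_Icc] at hdW
    omega
  -- the packaged pair facts
  have hpair : ∀ d ∈ K, 1 ≤ (φ d).1 ∧ (φ d).1 < d ∧ ((φ d).2 = 0 → (φ d).1 ∉ A) ∧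
      ((φ d).2 = 1 → (φ d).1 ∉ B) ∧ ((φ d).2 = 0 ∨ (φ d).2 = 1) ∧
      ((φ d).1 ∈ C → ((φ d).1 ∈ Bs ∧ (φ d).2 = 0)) := by
    intro d hd
    have hdge := (hKsub d hd).2.2.2.1
    rcases hphicases d hd with hb | ⟨hg, hdW⟩
    · rcases (memBP (φ d)).mp hb with ⟨hBs1, hs0⟩ | ⟨hBs1, hnC, hs1⟩
      · have hr := hBs1
        rw [hBsdef, Finset.mem_Icc] at hr
        refine ⟨by omega, by omega, fun _ => hAmid _ hr.1 hr.2, fun hs => by omega, Or.inl hs0,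
          fun _ => ⟨hBs1, hs0⟩⟩
      · have hr := hBs1
        rw [hBsdef, Finset.mem_Icc] at hr
        refine ⟨by omega, by omega, fun hs => by omega, fun _ => hBmid _ hr.1 hr.2, Or.inr hs1,
          fun hc => absurd hc hnC⟩
    · obtain ⟨hg3, hs0A, hs1A, hs01⟩ := memG3P (φ d) hg
      obtain ⟨hgW, hgC, hgAB⟩ := hG3W _ hg3
      have hr := hgW
      rw [hWdef, Finset.mem_Icc] at hr
      have hdbig := hKnW d hd hdW
      refine ⟨by omega, by omega, hs0A, ?_, hs01, fun hc => absurd hc hgC⟩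
      intro hs1
      intro hB
      exact hgAB (Finset.mem_inter.mpr ⟨hs1A hs1, hB⟩)
  set JA := K.filter (fun d => (φ d).2 = 0) with hJAdef
  set JB := K.filter (fun d => (φ d).2 = 1) with hJBdef
  set p := fun d => (φ d).1 with hpdef
  -- apply multishift
  have hA' : (A \ JA) ∪ JA.image p ∈ H := by
    apply multishift hH hshift p JA A hAH
    · intro j hj
      rw [hJAdef, Finset.mem_filter] at hj
      exact (hKsub j hj.1).1
    · intro j hj
      rw [hJAdef, Finset.mem_filter] at hj
      obtain ⟨h1, h2, h3, _, _, _⟩ := hpair j hj.1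
      exact ⟨h1, h2, h3 hj.2⟩
    · intro d1 h1 d2 h2 he
      rw [Finset.mem_coe, hJAdef, Finset.mem_filter] at h1 h2
      apply hphiinj d1 h1.1 d2 h2.1
      have : (φ d1).2 = (φ d2).2 := by rw [h1.2, h2.2]
      exact Prod.ext he this
  have hB' : (B \ JB) ∪ JB.image p ∈ H := by
    apply multishift hH hshift p JB B hBH
    · intro j hj
      rw [hJBdef, Finset.mem_filter] at hj
      exact (hKsub j hj.1).2.1
    · intro j hj
      rw [hJBdef, Finset.mem_filter] at hj
      obtain ⟨h1, h2, _, h4, _, _⟩ := hpair j hj.1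
      exact ⟨h1, h2, h4 hj.2⟩
    · intro d1 h1 d2 h2 he
      rw [Finset.mem_coe, hJBdef, Finset.mem_filter] at h1 h2
      apply hphiinj d1 h1.1 d2 h2.1
      have : (φ d1).2 = (φ d2).2 := by rw [h1.2, h2.2]
      exact Prod.ext he this
  set A' := (A \ JA) ∪ JA.image p with hA'def
  set B' := (B \ JB) ∪ JB.image p with hB'def
  -- p of JB avoids C
  have himB : ∀ d ∈ JB, p d ∉ C := by
    intro d hd hc
    rw [hJBdef, Finset.mem_filter] at hd
    have h0 := ((hpair d hd.1).2.2.2.2.2 hc).2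
    rw [hd.2] at h0
    exact one_ne_zero h0
  -- the final inclusion
  have hfinal : A' ∩ B' ∩ C ⊆ (C ∩ I1) ∪ R1 ∪ R2 := by
    intro x hx
    rw [Finset.mem_inter, Finset.mem_inter] at hx
    obtain ⟨⟨hxA', hxB'⟩, hxC⟩ := hx
    rw [hA'def, Finset.mem_union] at hxA'
    rcases hxA' with hxa | hxa
    · rw [hB'def, Finset.mem_union] at hxB'
      rcases hxB' with hxb | hxb
      · -- main case
        rw [Finset.mem_sdiff] at hxa hxb
        have hxA := hxa.1
        have hxB := hxb.1
        have hxn := Finset.mem_Icc.mp (hAn hxA)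
        by_cases hle : x ≤ t - 1
        · refine Finset.mem_union_left _ (Finset.mem_union_left _ ?_)
          rw [Finset.mem_inter, hI1def, Finset.mem_Icc]
          exact ⟨hxC, hxn.1, hle⟩
        · by_cases hle2 : x ≤ t + h - 1
          · exact absurd hxA (hAmid x (by omega) (by omega))
          · have hxK : x ∉ K := by
              intro hk
              rcases (hpair x hk).2.2.2.2.1 with hs | hs
              · exact hxa.2 (by rw [hJAdef, Finset.mem_filter]; exact ⟨hk, hs⟩)
              · exact hxb.2 (by rw [hJBdef, Finset.mem_filter]; exact ⟨hk, hs⟩)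
            have hxDC : x ∈ D ∩ C := by
              rw [Finset.mem_inter, hDdef, Finset.mem_inter, Finset.mem_inter, Finset.mem_Icc]
              exact ⟨⟨⟨hxA, hxB⟩, by omega, hxn.2⟩, hxC⟩
            by_cases hxW : x ∈ W
            · have hxMid : x ∈ Mid := by
                rw [hMiddef, Finset.mem_inter]
                exact ⟨hxDC, hxW⟩
              have : x ∈ R1 := by
                by_contra hR
                apply hxK
                rw [hKdef, Finset.mem_union]
                exact Or.inl (Finset.mem_sdiff.mpr ⟨hxMid, hR⟩)
              exact Finset.mem_union_left _ (Finset.mem_union_right _ this)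
            · have hxL : x ∈ L := by
                rw [hLdef, Finset.mem_sdiff]
                exact ⟨hxDC, hxW⟩
              have : x ∈ R2 := by
                by_contra hR
                apply hxK
                rw [hKdef, Finset.mem_union]
                exact Or.inr (Finset.mem_sdiff.mpr ⟨hxL, hR⟩)
              exact Finset.mem_union_right _ this
      · exfalso
        obtain ⟨d, hd, rfl⟩ := Finset.mem_image.mp hxb
        exact himB d hd hxC
    · -- x is a target of an A-shift
      obtain ⟨d, hd, rfl⟩ := Finset.mem_image.mp hxa
      exfalso
      rw [hJAdef, Finset.mem_filter] at hd
      have hBs1 := ((hpair d hd.1).2.2.2.2.2 hxC).1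
      rw [hBsdef, Finset.mem_Icc] at hBs1
      rw [hB'def, Finset.mem_union] at hxB'
      rcases hxB' with hxb | hxb
      · exact hBmid _ hBs1.1 hBs1.2 (Finset.mem_sdiff.mp hxb).1
      · obtain ⟨d2, hd2, he⟩ := Finset.mem_image.mp hxb
        exact himB d2 hd2 (he ▸ hxC)
  -- cardinality bound and contradiction
  have hcard : (A' ∩ B' ∩ C).card ≤ t - 1 := by
    have h1 := Finset.card_le_card hfinal
    have h2 : ((C ∩ I1) ∪ R1 ∪ R2).card ≤ (C ∩ I1).card + R1.card + R2.card := by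
      calc ((C ∩ I1) ∪ R1 ∪ R2).card ≤ ((C ∩ I1) ∪ R1).card + R2.card :=
            Finset.card_union_le _ _
        _ ≤ (C ∩ I1).card + R1.card + R2.card := by
            have := Finset.card_union_le (C ∩ I1) R1
            omega
    have h3 := hnum.2.2
    omega
  have htrip := hint ![A', B', C] (by
    intro k
    fin_cases k
    · simpa using hA'
    · simpa using hB'
    · simpa using hCH)
  have hIeq : (⋂ k, ((![A', B', C] k : Finset ℕ) : Set ℕ)) =
      ((A' ∩ B' ∩ C : Finset ℕ) : Set ℕ) := by
    ext x
    simp only [Set.mem_iInter, Finset.coe_inter, Set.mem_inter_iff, Fin.forall_fin_succ,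
      Fin.forall_fin_zero_pi, Matrix.cons_val_zero, Matrix.cons_val_one, Matrix.head_cons,
      Matrix.cons_val_succ, Finset.mem_coe]
    constructor
    · intro hx
      exact ⟨⟨hx.1, hx.2.1⟩, hx.2.2.1⟩
    · intro hx
      exact ⟨hx.1.1, hx.1.2, hx.2, fun k => k.elim0⟩
  rw [hIeq, Set.ncard_coe_finset] at htrip
  omega
end

section
/- Let H ⊆ 2^{[n]} be shifted 3-wise t-intersecting with H ⊄ F_0^t, and h, T_i as defined. Then μ_p(H) ≤ Σ_{i=0}^{h} C(t+h−1, i) p^{t+h−1−i} q^{i} μ_p(T_i : [t+h, n]), where μ_p(T_i : [t+h,n]) is the p-biased measure of T_i on the ground set [t+h, n]. -/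
open Finset

lemma shift_mem {n : ℕ} {H : Finset (Finset ℕ)} (hshift : Shifted n H)
    (hH : ∀ A ∈ H, A ⊆ Finset.Icc 1 n) {A : Finset ℕ} (hA : A ∈ H)
    {i j : ℕ} (hi : 1 ≤ i) (hij : i < j) (hjA : j ∈ A) (hiA : i ∉ A) :
    A.erase j ∪ {i} ∈ H := by
  by_contra hc
  have hjn : j ≤ n := (Finset.mem_Icc.mp (hH A hA hjA)).2
  have hs := hshift i j hi hij hjn
  have hinter : A ∩ {i, j} = {j} := by
    ext x
    simp only [Finset.mem_inter, Finset.mem_insert, Finset.mem_singleton]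
    constructor
    · rintro ⟨hx, rfl | rfl⟩
      · exact absurd hx hiA
      · rfl
    · rintro rfl; exact ⟨hjA, Or.inr rfl⟩
  have hmem : shiftSet i j H A ∈ shift i j H := Finset.mem_image_of_mem _ hA
  rw [hs] at hmem
  rw [shiftSet, if_pos ⟨hinter, hc⟩] at hmem
  exact hc hmem

lemma compress_mem {n : ℕ} {H : Finset (Finset ℕ)} (hshift : Shifted n H)
    (hH : ∀ A ∈ H, A ⊆ Finset.Icc 1 n) (m : ℕ) :
    ∀ N A, A ∈ H → (A ∩ Finset.Icc 1 m).sum id = N →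
      Finset.Icc 1 (A ∩ Finset.Icc 1 m).card ∪ (A \ Finset.Icc 1 m) ∈ H := by
  intro N
  induction N using Nat.strong_induction_on with
  | _ N ih =>
    intro A hA hsum
    set S := A ∩ Finset.Icc 1 m with hS
    by_cases heq : S = Finset.Icc 1 S.card
    · have hAeq : Finset.Icc 1 S.card ∪ (A \ Finset.Icc 1 m) = A := by
        rw [← heq, hS]
        ext x; simp only [Finset.mem_union, Finset.mem_inter, Finset.mem_sdiff]; tauto
      rw [hAeq]; exact hA
    · have hSsub : S ⊆ Finset.Icc 1 m := Finset.inter_subset_right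
      have hsm : S.card ≤ m := by
        have := Finset.card_le_card hSsub
        simpa using this
      have hnotsub : ¬ S ⊆ Finset.Icc 1 S.card := by
        intro hsub
        exact heq (Finset.eq_of_subset_of_card_le hsub (by simp))
      obtain ⟨j, hjS, hjout⟩ := Finset.not_subset.mp hnotsub
      have hj1 : 1 ≤ j := (Finset.mem_Icc.mp (hSsub hjS)).1
      have hjs : S.card < j := by
        simp only [Finset.mem_Icc] at hjout; omega
      have hnotsub2 : ¬ Finset.Icc 1 S.card ⊆ S := by
        intro hsub
        have h1 : insert j (Finset.Icc 1 S.card) ⊆ S := Finset.insert_subset hjS hsub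
        have h2 := Finset.card_le_card h1
        rw [Finset.card_insert_of_notMem hjout] at h2
        simp at h2
      obtain ⟨i, hiIcc, hiS⟩ := Finset.not_subset.mp hnotsub2
      have hi1 : 1 ≤ i := (Finset.mem_Icc.mp hiIcc).1
      have his : i ≤ S.card := (Finset.mem_Icc.mp hiIcc).2
      have hij : i < j := lt_of_le_of_lt his hjs
      have hiA : i ∉ A := fun hx =>
        hiS (by rw [hS]; exact Finset.mem_inter.mpr ⟨hx, Finset.mem_Icc.mpr ⟨hi1, le_trans his hsm⟩⟩)
      have hjA : j ∈ A := (Finset.mem_inter.mp (hS ▸ hjS)).1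
      have hjm : j ≤ m := (Finset.mem_Icc.mp (hSsub hjS)).2
      have hA' : A.erase j ∪ {i} ∈ H := shift_mem hshift hH hA hi1 hij hjA hiA
      set A' := A.erase j ∪ {i} with hA'def
      have hS' : A' ∩ Finset.Icc 1 m = S.erase j ∪ {i} := by
        ext x
        simp only [hA'def, hS, Finset.mem_inter, Finset.mem_union, Finset.mem_erase,
          Finset.mem_singleton, Finset.mem_Icc]
        constructor
        · rintro ⟨hxne | rfl, hx2⟩
          · exact Or.inl ⟨hxne.1, hxne.2, hx2⟩
          · exact Or.inr rfl
        · rintro (⟨hne, hxA, hxm⟩ | rfl)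
          · exact ⟨Or.inl ⟨hne, hxA⟩, hxm⟩
          · exact ⟨Or.inr rfl, hi1, le_trans his hsm⟩
      have hiS' : i ∉ S.erase j := fun hx => hiS (Finset.mem_of_mem_erase hx)
      have hcard' : (A' ∩ Finset.Icc 1 m).card = S.card := by
        rw [hS', Finset.union_comm, ← Finset.insert_eq,
          Finset.card_insert_of_notMem hiS', Finset.card_erase_of_mem hjS]
        have : 1 ≤ S.card := Finset.card_pos.mpr ⟨j, hjS⟩
        omega
      have hsdiff' : A' \ Finset.Icc 1 m = A \ Finset.Icc 1 m := by
        ext x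
        simp only [hA'def, Finset.mem_sdiff, Finset.mem_union, Finset.mem_erase,
          Finset.mem_singleton, Finset.mem_Icc]
        constructor
        · rintro ⟨hxne | rfl, hx2⟩
          · exact ⟨hxne.2, hx2⟩
          · exact absurd ⟨hi1, le_trans his hsm⟩ hx2
        · rintro ⟨hxA, hx2⟩
          refine ⟨Or.inl ⟨?_, hxA⟩, hx2⟩
          rintro rfl; exact hx2 ⟨hj1, hjm⟩
      have hjsum : j ≤ N := by
        rw [← hsum]
        exact Finset.single_le_sum (f := id) (fun x _ => Nat.zero_le x) hjS
      have hsum' : (A' ∩ Finset.Icc 1 m).sum id = N - j + i := by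
        rw [hS', Finset.sum_union (Finset.disjoint_singleton_right.mpr hiS'),
          Finset.sum_singleton]
        have := Finset.sum_erase_add S id hjS
        simp only [id] at this hsum ⊢
        omega
      have hlt : N - j + i < N := by omega
      have := ih _ hlt A' hA' hsum'
      rw [hcard', hsdiff'] at this
      exact this

theorem stmt_16 (n t h : ℕ) (hn : t + h ≤ n) (H : Finset (Finset ℕ))
    (hH : ∀ A ∈ H, A ⊆ Finset.Icc 1 n)
    (hshift : Shifted n H) (hint : RWise 3 t H) (hnot : ¬ H ⊆ F0 n t)
    (hh : ∀ A ∈ H, t ≤ (A ∩ Finset.Icc 1 (t + h)).card)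
    (hh' : ∀ i < h, ∃ A ∈ H, (A ∩ Finset.Icc 1 (t + i)).card < t)
    (p : ℝ) (hp : 0 < p) (hp1 : p < 1) :
    mu p n H ≤ ∑ i ∈ Finset.range (h + 1),
      (Nat.choose (t + h - 1) i : ℝ) * p ^ (t + h - 1 - i) * (1 - p) ^ i *
        muOn p (Finset.Icc (t + h) n)
          ((H.filter (fun A => Finset.Icc 1 (t + h - 1) \ A =
              Finset.Icc (t + h - i) (t + h - 1))).image
            (fun A => A ∩ Finset.Icc (t + h) n)) := by
  classical
  have ht : 1 ≤ t := by
    rcases Nat.eq_zero_or_pos t with rfl | ht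
    · exact absurd (fun A hA => by
        simp only [F0, Finset.mem_filter, Finset.mem_powerset]
        exact ⟨hH A hA, by simp⟩) hnot
    · exact ht
  set m := t + h - 1 with hm
  have hm1 : m + 1 = t + h := by omega
  have hhm : h ≤ m := by omega
  have hmn : m < n := by omega
  have hp0 : (0:ℝ) ≤ p := le_of_lt hp
  have hq0 : (0:ℝ) ≤ 1 - p := by linarith
  have hcardIcc : (Finset.Icc 1 m).card = m := by simp
  have hcardTail : (Finset.Icc (t+h) n).card = n - m := by
    rw [Nat.card_Icc]; omega
  set F : Finset ℕ → ℝ := fun A => p ^ A.card * (1 - p) ^ (n - A.card) with hF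
  set g : Finset ℕ → ℝ := fun T => p ^ T.card * (1 - p) ^ ((n - m) - T.card) with hg
  have hgnn : ∀ T, 0 ≤ g T := fun T => mul_nonneg (pow_nonneg hp0 _) (pow_nonneg hq0 _)
  have hkey : ∀ A ∈ H, (Finset.Icc 1 m \ A).card ≤ h := by
    intro A hA
    have h1 := hh A hA
    have h2 : A ∩ Finset.Icc 1 (t+h) ⊆ insert (t+h) (A ∩ Finset.Icc 1 m) := by
      intro x hx
      simp only [Finset.mem_inter, Finset.mem_Icc] at hx
      simp only [Finset.mem_insert, Finset.mem_inter, Finset.mem_Icc]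
      rcases eq_or_ne x (t+h) with rfl | hne
      · exact Or.inl rfl
      · exact Or.inr ⟨hx.1, hx.2.1, by omega⟩
    have h3 := (Finset.card_le_card h2).trans (Finset.card_insert_le _ _)
    have h4 := Finset.card_sdiff_add_card_inter (Finset.Icc 1 m) A
    rw [hcardIcc, Finset.inter_comm] at h4
    omega
  have hdecomp : mu p n H = ∑ i ∈ Finset.range (h + 1),
      ∑ B ∈ Finset.powersetCard i (Finset.Icc 1 m),
        ∑ A ∈ H.filter (fun A => Finset.Icc 1 m \ A = B), F A := by
    rw [mu, ← Finset.sum_fiberwise_of_maps_to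
      (g := fun A => Finset.Icc 1 m \ A) (t := (Finset.Icc 1 m).powerset)
      (fun A _ => Finset.mem_powerset.mpr Finset.sdiff_subset) F,
      Finset.sum_powerset, hcardIcc]
    symm
    apply Finset.sum_subset (Finset.range_subset_range.mpr (by omega))
    intro i _ hi2
    apply Finset.sum_eq_zero
    intro B hB
    apply Finset.sum_eq_zero
    intro A hA
    exfalso
    rw [Finset.mem_filter] at hA
    have hcB := (Finset.mem_powersetCard.mp hB).2
    have := hkey A hA.1
    rw [hA.2, hcB] at this
    simp only [Finset.mem_range] at hi2
    omega
  rw [hdecomp]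
  apply Finset.sum_le_sum
  intro j hj
  simp only [Finset.mem_range] at hj
  have hjh : j ≤ h := by omega
  -- the target family
  set Tfam : Finset (Finset ℕ) :=
    (H.filter (fun A => Finset.Icc 1 m \ A = Finset.Icc (t + h - j) m)).image
      (fun A => A ∩ Finset.Icc (t + h) n) with hTfam
  have hBbound : ∀ B ∈ Finset.powersetCard j (Finset.Icc 1 m),
      ∑ A ∈ H.filter (fun A => Finset.Icc 1 m \ A = B), F A ≤
        p ^ (m - j) * (1 - p) ^ j * muOn p (Finset.Icc (t+h) n) Tfam := by
    intro B hB
    obtain ⟨hBsub, hBcard⟩ := Finset.mem_powersetCard.mp hB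
    set fiber := H.filter (fun A => Finset.Icc 1 m \ A = B) with hfib
    have hfibfacts : ∀ A ∈ fiber, A ∈ H ∧ A ∩ Finset.Icc 1 m = Finset.Icc 1 m \ B ∧
        A = (Finset.Icc 1 m \ B) ∪ (A ∩ Finset.Icc (t+h) n) ∧
        (A ∩ Finset.Icc 1 m).card = m - j := by
      intro A hA
      rw [hfib, Finset.mem_filter] at hA
      obtain ⟨hAH, hAB⟩ := hA
      have hAint : A ∩ Finset.Icc 1 m = Finset.Icc 1 m \ B := by
        rw [← hAB, Finset.sdiff_sdiff_self_left, Finset.inter_comm]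
      have hsplit : A = (Finset.Icc 1 m \ B) ∪ (A ∩ Finset.Icc (t+h) n) := by
        rw [← hAint]
        ext x
        simp only [Finset.mem_union, Finset.mem_inter, Finset.mem_Icc]
        constructor
        · intro hx
          have hxn := Finset.mem_Icc.mp (hH A hAH hx)
          rcases le_or_gt x m with hxm | hxm
          · exact Or.inl ⟨hx, hxn.1, hxm⟩
          · exact Or.inr ⟨hx, by omega, hxn.2⟩
        · rintro (⟨hx, _⟩ | ⟨hx, _⟩) <;> exact hx
      have hcint : (A ∩ Finset.Icc 1 m).card = m - j := by
        rw [hAint, Finset.card_sdiff_of_subset hBsub, hcardIcc, hBcard]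
      exact ⟨hAH, hAint, hsplit, hcint⟩
    have hterm : ∀ A ∈ fiber, F A = p ^ (m - j) * (1 - p) ^ j *
        g (A ∩ Finset.Icc (t+h) n) := by
      intro A hA
      obtain ⟨hAH, hAint, hsplit, hcint⟩ := hfibfacts A hA
      set c := (A ∩ Finset.Icc (t+h) n).card with hc
      have hcn : c ≤ n - m := by
        rw [hc, ← hcardTail]
        exact Finset.card_le_card Finset.inter_subset_right
      have hdisj : Disjoint (Finset.Icc 1 m \ B) (A ∩ Finset.Icc (t+h) n) := by
        rw [Finset.disjoint_left]
        intro x hx1 hx2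
        have := (Finset.mem_Icc.mp (Finset.mem_sdiff.mp hx1).1).2
        have := (Finset.mem_Icc.mp (Finset.mem_inter.mp hx2).2).1
        omega
      have hcardA : A.card = (m - j) + c := by
        conv_lhs => rw [hsplit]
        rw [Finset.card_union_of_disjoint hdisj, ← hAint, hcint]
      have hAn : A.card ≤ n := by
        have := Finset.card_le_card (hH A hAH)
        simpa using this
      rw [hF, hg]
      simp only []
      rw [← hc, hcardA]
      have hexp : n - (m - j + c) = j + ((n - m) - c) := by omega
      rw [hexp, pow_add, pow_add]
      ring
    have hinj : ∀ A ∈ fiber, ∀ A' ∈ fiber,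
        A ∩ Finset.Icc (t+h) n = A' ∩ Finset.Icc (t+h) n → A = A' := by
      intro A hA A' hA' hEq
      obtain ⟨_, _, hsplit, _⟩ := hfibfacts A hA
      obtain ⟨_, _, hsplit', _⟩ := hfibfacts A' hA'
      rw [hsplit, hsplit', hEq]
    have hsubT : fiber.image (fun A => A ∩ Finset.Icc (t+h) n) ⊆ Tfam := by
      intro T hT
      obtain ⟨A, hAfib, rfl⟩ := Finset.mem_image.mp hT
      obtain ⟨hAH, hAint, hsplit, hcint⟩ := hfibfacts A hAfib
      have hA' := compress_mem hshift hH m _ A hAH rfl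
      rw [hcint] at hA'
      set A' := Finset.Icc 1 (m - j) ∪ (A \ Finset.Icc 1 m) with hA'def
      have hP1 : Finset.Icc 1 m \ A' = Finset.Icc (t + h - j) m := by
        ext x
        simp only [hA'def, Finset.mem_sdiff, Finset.mem_union, Finset.mem_Icc]
        by_cases hxA : x ∈ A <;> simp [hxA, Finset.mem_Icc] <;> omega
      have hP2 : A' ∩ Finset.Icc (t+h) n = A ∩ Finset.Icc (t+h) n := by
        ext x
        simp only [hA'def, Finset.mem_inter, Finset.mem_union, Finset.mem_sdiff,
          Finset.mem_Icc]
        by_cases hxA : x ∈ A <;> simp [hxA, Finset.mem_Icc] <;> omega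
      rw [← hP2, hTfam]
      exact Finset.mem_image_of_mem _ (Finset.mem_filter.mpr ⟨hA', hP1⟩)
    calc ∑ A ∈ fiber, F A
        = ∑ A ∈ fiber, p ^ (m - j) * (1 - p) ^ j * g (A ∩ Finset.Icc (t+h) n) :=
          Finset.sum_congr rfl hterm
      _ = p ^ (m - j) * (1 - p) ^ j * ∑ A ∈ fiber, g (A ∩ Finset.Icc (t+h) n) := by
          rw [Finset.mul_sum]
      _ = p ^ (m - j) * (1 - p) ^ j *
            ∑ T ∈ fiber.image (fun A => A ∩ Finset.Icc (t+h) n), g T := by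
          rw [Finset.sum_image hinj]
      _ ≤ p ^ (m - j) * (1 - p) ^ j * ∑ T ∈ Tfam, g T := by
          apply mul_le_mul_of_nonneg_left _
            (mul_nonneg (pow_nonneg hp0 _) (pow_nonneg hq0 _))
          exact Finset.sum_le_sum_of_subset_of_nonneg hsubT (fun T _ _ => hgnn T)
      _ = p ^ (m - j) * (1 - p) ^ j * muOn p (Finset.Icc (t+h) n) Tfam := by
          rw [muOn, hcardTail]
  calc ∑ B ∈ Finset.powersetCard j (Finset.Icc 1 m),
        ∑ A ∈ H.filter (fun A => Finset.Icc 1 m \ A = B), F A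
      ≤ ∑ _B ∈ Finset.powersetCard j (Finset.Icc 1 m),
          p ^ (m - j) * (1 - p) ^ j * muOn p (Finset.Icc (t+h) n) Tfam :=
        Finset.sum_le_sum hBbound
    _ = (Nat.choose m j : ℝ) * p ^ (m - j) * (1 - p) ^ j *
          muOn p (Finset.Icc (t+h) n) Tfam := by
        rw [Finset.sum_const, Finset.card_powersetCard, hcardIcc, nsmul_eq_mul]
        ring
end

section
/- Let p_0(t) = 2/(√(4t+9) − 1) and q_0 = 1 − p_0. The function f(t) = √t · p_0(t) · q_0(t) = 2√t(√(4t+9) − 3)/(√(4t+9) − 1)^2 is strictly increasing in t for t ≥ 1, tends to 1 as t → ∞, and in particular f(t) < 1 for all t ≥ 1. -/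
open Finset

noncomputable def p0R (t : ℝ) : ℝ := 2 / (Real.sqrt (4 * t + 9) - 1)

noncomputable def fR (t : ℝ) : ℝ := Real.sqrt t * p0R t * (1 - p0R t)

/-!
Write `p = p₀(t)` and `q = 1 - p`. Solving `p = 2/(√(4t+9) - 1)` for `t` gives `t p² = q(1 + 2p)`,
so `f(t) = √t · p q = √(q³(1 + 2p))`. The polynomial `(1 - p)³(1 + 2p)` has derivative
`-(1 - p)²(1 + 8p) < 0` on `(0, 1)` and equals `1` at `p = 0`, while `p₀` decreases from `p₀(0) = 1`
to `0`; monotonicity, the limit and the bound all follow.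
-/

open Filter Set Topology

theorem strictAntiOn_one_sub_pow_three_mul_one_add_two_mul :
    StrictAntiOn (fun p : ℝ => (1 - p) ^ 3 * (1 + 2 * p)) (Set.Icc 0 1) := by
  have hderiv (p : ℝ) : HasDerivAt (fun p : ℝ => (1 - p) ^ 3 * (1 + 2 * p))
      (-((1 - p) ^ 2 * (1 + 8 * p))) p := by
    refine ((((hasDerivAt_id' p).const_sub 1).fun_pow 3).fun_mul
      (((hasDerivAt_id' p).const_mul 2).const_add 1)).congr_deriv ?_
    norm_num
    ring
  refine strictAntiOn_of_deriv_neg (convex_Icc 0 1) (by fun_prop) fun p hp => ?_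
  rw [interior_Icc] at hp
  have hq : 0 < 1 - p := sub_pos.2 hp.2
  have hp' : 0 < 1 + 8 * p := by linarith [hp.1]
  rw [(hderiv p).deriv, neg_neg_iff_pos]
  positivity

theorem one_lt_sqrt_four_mul_add_nine {t : ℝ} (ht : -2 < t) : 1 < √(4 * t + 9) :=
  Real.lt_sqrt_of_sq_lt (by linarith)

theorem p0R_pos {t : ℝ} (ht : -2 < t) : 0 < p0R t :=
  div_pos two_pos (sub_pos.2 (one_lt_sqrt_four_mul_add_nine ht))

theorem p0R_le_one {t : ℝ} (ht : 0 ≤ t) : p0R t ≤ 1 := by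
  have h3 : 3 ≤ √(4 * t + 9) := Real.le_sqrt_of_sq_le (by linarith)
  rw [p0R, div_le_one (by linarith)]
  linarith

theorem strictAntiOn_p0R : StrictAntiOn p0R (Ioi (-2)) := by
  intro s hs t ht hst
  have hsqrt : √(4 * s + 9) < √(4 * t + 9) :=
    Real.sqrt_lt_sqrt (by linarith [mem_Ioi.1 hs]) (by linarith)
  exact div_lt_div_of_pos_left two_pos
    (sub_pos.2 (one_lt_sqrt_four_mul_add_nine hs)) (by linarith)

theorem tendsto_p0R_atTop : Tendsto p0R atTop (𝓝 0) := by
  have hlin : Tendsto (fun t : ℝ => 4 * t + 9) atTop atTop :=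
    tendsto_atTop_add_const_right _ _ (tendsto_id.const_mul_atTop four_pos)
  exact tendsto_const_nhds.div_atTop
    (tendsto_atTop_add_const_right _ _ (Real.tendsto_sqrt_atTop.comp hlin))

theorem mul_p0R_sq {t : ℝ} (ht : -2 < t) :
    t * p0R t ^ 2 = (1 - p0R t) * (1 + 2 * p0R t) := by
  have hu := one_lt_sqrt_four_mul_add_nine ht
  have hsq : √(4 * t + 9) ^ 2 = 4 * t + 9 := Real.sq_sqrt (by linarith)
  have hu1 : √(4 * t + 9) - 1 ≠ 0 := (sub_pos.2 hu).ne'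
  rw [p0R]
  set u := √(4 * t + 9)
  field_simp
  linear_combination -hsq

theorem fR_eq_sqrt {t : ℝ} (ht : 0 ≤ t) :
    fR t = √((1 - p0R t) ^ 3 * (1 + 2 * p0R t)) := by
  have hp := p0R_pos (t := t) (by linarith)
  have hq : 0 ≤ 1 - p0R t := sub_nonneg.2 (p0R_le_one ht)
  rw [show (1 - p0R t) ^ 3 * (1 + 2 * p0R t) = t * (p0R t * (1 - p0R t)) ^ 2 by
      linear_combination (1 - p0R t) ^ 2 * (mul_p0R_sq (t := t) (by linarith)).symm,
    Real.sqrt_mul ht, Real.sqrt_sq (by positivity), fR, mul_assoc]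

theorem strictMonoOn_fR : StrictMonoOn fR (Ici 0) := by
  intro s (hs : 0 ≤ s) t (ht : 0 ≤ t) hst
  have hp_mem {x : ℝ} (hx : 0 ≤ x) : p0R x ∈ Set.Icc 0 1 :=
    ⟨(p0R_pos (by linarith)).le, p0R_le_one hx⟩
  have hpt : p0R t < p0R s :=
    strictAntiOn_p0R (mem_Ioi.2 (by linarith)) (mem_Ioi.2 (by linarith)) hst
  have hq : 0 ≤ 1 - p0R s := sub_nonneg.2 (hp_mem hs).2
  rw [fR_eq_sqrt hs, fR_eq_sqrt ht]
  exact Real.sqrt_lt_sqrt (mul_nonneg (pow_nonneg hq 3) (by linarith [(hp_mem hs).1]))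
    (strictAntiOn_one_sub_pow_three_mul_one_add_two_mul (hp_mem ht) (hp_mem hs) hpt)

theorem tendsto_fR_atTop : Tendsto fR atTop (𝓝 1) := by
  have hlim : Tendsto (fun t => √((1 - p0R t) ^ 3 * (1 + 2 * p0R t))) atTop (𝓝 1) := by
    have hcont : Continuous fun p : ℝ => √((1 - p) ^ 3 * (1 + 2 * p)) := by fun_prop
    simpa [Function.comp_def] using (hcont.tendsto 0).comp tendsto_p0R_atTop
  refine hlim.congr' ?_
  filter_upwards [eventually_ge_atTop 0] with t ht
  exact (fR_eq_sqrt ht).symm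

theorem fR_lt_one {t : ℝ} (ht : 0 < t) : fR t < 1 := by
  have hlt := strictAntiOn_one_sub_pow_three_mul_one_add_two_mul ⟨le_rfl, zero_le_one⟩
    ⟨(p0R_pos (by linarith)).le, p0R_le_one ht.le⟩ (p0R_pos (by linarith))
  rw [fR_eq_sqrt ht.le, Real.sqrt_lt' one_pos]
  simpa using hlt

theorem stmt_17 :
    (∀ s t : ℝ, 1 ≤ s → s < t → fR s < fR t) ∧
    Filter.Tendsto fR Filter.atTop (nhds 1) ∧
    (∀ t : ℝ, 1 ≤ t → fR t < 1) :=
  ⟨fun s t hs hst => strictMonoOn_fR (mem_Ici.2 (by linarith)) (mem_Ici.2 (by linarith)) hst,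
    tendsto_fR_atTop, fun t ht => fR_lt_one (by linarith)⟩
end
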